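/- arXiv:1312.3784 — 5 statements merged into one kernel-verified Lean document; each statement's English description precedes it below -/
import Mathlib

section
/- For every a, b, c in the loop algebra 𝔏 = Matrix (Fin N) (Fin N) (LaurentPolynomial ℂ), the cocycle identity holds: ψ([a,b],c) + ψ([b,c],a) + ψ([c,a],b) = 0. -/
noncomputable section

/-- The loop algebra: `N × N` matrices over Laurent polynomials, a Lie ring under the
commutator bracket `⁅a, b⁆ = a * b - b * a`. -/
abbrev Loop (N : ℕ) := Matrix (Fin N) (Fin N) (LaurentPolynomial ℂ)

/-- The matrix of `n`-th Laurent coefficients of the entries of `a`. -/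
def coeffM {N : ℕ} (a : Loop N) (n : ℤ) : Matrix (Fin N) (Fin N) ℂ :=
  fun i j => (a i j).coeff n

/-- The cocycle `ψ(a,b) = Σₙ n · trace(aₙ * b₋ₙ)`, i.e. `Res(tr((da/dt)·b))`. -/
def psi {N : ℕ} (a b : Loop N) : ℂ :=
  ∑ᶠ n : ℤ, (n : ℂ) * Matrix.trace (coeffM a n * coeffM b (-n))

/-!
Write `D = t d/dt`, acting entrywise on matrices, and `Res tr x` for the constant coefficient of
`tr x`. Then `ψ(a, b) = Res tr (D a * b)`. Only three facts are needed: `D` is a derivation of the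
matrix ring, `Res tr (x * y) = Res tr (y * x)`, and `Res tr ∘ D = 0`. Expanding `D ⁅a, b⁆` by
Leibniz and rotating under the trace, the cyclic sum becomes
`2 Res tr (D (a * b * c)) - 2 Res tr (D (a * c * b)) = 0`.
-/

open LaurentPolynomial AddMonoidAlgebra

namespace LaurentPolynomial

section Semiring
variable {R : Type*} [Semiring R]

theorem support_coeff_mul_coeff_subset (f g : R[T;T⁻¹]) (m : ℤ) :
    (Function.support fun n => f.coeff n * g.coeff (m - n)) ⊆ f.coeff.support :=
  fun _ hn => by simpa using left_ne_zero_of_mul hn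

theorem hasFiniteSupport_coeff_mul_coeff (f g : R[T;T⁻¹]) (m : ℤ) :
    Function.HasFiniteSupport fun n => f.coeff n * g.coeff (m - n) :=
  f.coeff.support.finite_toSet.subset (support_coeff_mul_coeff_subset f g m)

theorem coeff_mul_eq_finsum (f g : R[T;T⁻¹]) (m : ℤ) :
    (f * g).coeff m = ∑ᶠ n, f.coeff n * g.coeff (m - n) := by
  rw [coeff_mul_apply_left, Finsupp.sum,
    finsum_eq_sum_of_support_subset _ (support_coeff_mul_coeff_subset f g m)]
  simp only [sub_eq_neg_add]

end Semiring

section Ring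
variable {R : Type*} [Ring R]

def tDeriv : R[T;T⁻¹] →+ R[T;T⁻¹] where
  toFun f := ofCoeff ((fun n : ℤ => (n : R)) • f.coeff)
  map_zero' := by simp
  map_add' f g := by simp [smul_add]

theorem coeff_tDeriv (f : R[T;T⁻¹]) (n : ℤ) : (tDeriv f).coeff n = n * f.coeff n := rfl

theorem tDeriv_single (n : ℤ) (c : R) : tDeriv (single n c) = single n (n * c) := by
  ext m
  simp only [coeff_tDeriv, coeff_single, Finsupp.single_apply]
  split_ifs with h <;> simp [h]

theorem tDeriv_mul (f g : R[T;T⁻¹]) : tDeriv (f * g) = tDeriv f * g + f * tDeriv g := by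
  induction f using AddMonoidAlgebra.induction_linear with
  | zero => simp
  | add f f' hf hf' => simp only [add_mul, map_add, hf, hf']; abel
  | single n c =>
    induction g using AddMonoidAlgebra.induction_linear with
    | zero => simp
    | add g g' hg hg' => simp only [mul_add, map_add, hg, hg']; abel
    | single m d =>
      simp only [single_mul_single, tDeriv_single, ← single_add]
      congr 1
      push_cast
      rw [add_mul, mul_assoc, ← mul_assoc c, ← Int.cast_comm, mul_assoc]

end Ring

end LaurentPolynomial

theorem AddMonoidHom.mapMatrix_mul_of_leibniz {l m n α : Type*} [Fintype m]
    [NonUnitalNonAssocSemiring α] (D : α →+ α) (hD : ∀ x y, D (x * y) = D x * y + x * D y)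
    (A : Matrix l m α) (B : Matrix m n α) :
    D.mapMatrix (A * B) = D.mapMatrix A * B + A * D.mapMatrix B := by
  ext i j
  simp [Matrix.mul_apply, hD, Finset.sum_add_distrib]

section ResTrace
variable {n R : Type*} [Fintype n] [CommRing R]

def resTrace : Matrix n n R[T;T⁻¹] →+ R where
  toFun x := x.trace.coeff 0
  map_zero' := by simp
  map_add' x y := by simp [Matrix.trace_add]

theorem resTrace_apply (x : Matrix n n R[T;T⁻¹]) : resTrace x = x.trace.coeff 0 := rfl

theorem resTrace_mul_comm (x y : Matrix n n R[T;T⁻¹]) : resTrace (x * y) = resTrace (y * x) := by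
  rw [resTrace_apply, Matrix.trace_mul_comm, resTrace_apply]

theorem resTrace_mapMatrix_tDeriv (x : Matrix n n R[T;T⁻¹]) :
    resTrace (tDeriv.mapMatrix x) = 0 := by
  simp [resTrace_apply, Matrix.trace, coeff_tDeriv]

end ResTrace

theorem psi_eq_resTrace {N : ℕ} (a b : Loop N) : psi a b = resTrace (tDeriv.mapMatrix a * b) := by
  have hfin (i k : Fin N) :
      Function.HasFiniteSupport fun n => (tDeriv (a i k)).coeff n * (b k i).coeff (0 - n) :=
    hasFiniteSupport_coeff_mul_coeff ..
  calc psi a b = ∑ᶠ n, ∑ i, ∑ k, (tDeriv (a i k)).coeff n * (b k i).coeff (0 - n) := by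
        simp only [psi, coeffM, Matrix.trace, Matrix.diag, Matrix.mul_apply, Finset.mul_sum,
          coeff_tDeriv, mul_assoc, zero_sub]
    _ = ∑ i, ∑ k, ∑ᶠ n, (tDeriv (a i k)).coeff n * (b k i).coeff (0 - n) := by
        rw [finsum_sum_comm _ _ fun i _ => .sum (fun k => hfin i k) _]
        simp only [finsum_sum_comm _ _ fun k _ => hfin _ k]
    _ = resTrace (tDeriv.mapMatrix a * b) := by
        simp [resTrace_apply, Matrix.trace, Matrix.mul_apply, coeff_mul_eq_finsum]

section DerivTraceForm
variable {A M : Type*} [Ring A] [AddCommGroup M] {D : A →+ A} {τ : A →+ M}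

theorem trace_mul_mul_rotate (hτ : ∀ x y, τ (x * y) = τ (y * x)) (x y z : A) :
    τ (x * y * z) = τ (y * (z * x)) := by
  rw [mul_assoc, hτ, mul_assoc]

theorem trace_deriv_mul_mul (hD : ∀ x y, D (x * y) = D x * y + x * D y)
    (hτ : ∀ x y, τ (x * y) = τ (y * x)) (x y z : A) :
    τ (D (x * y * z)) = τ (D x * (y * z)) + τ (D y * (z * x)) + τ (D z * (x * y)) := by
  rw [hD, hD, add_mul, map_add, map_add, ← mul_assoc, trace_mul_mul_rotate hτ x, hτ (x * y)]

theorem trace_deriv_lie_mul (hD : ∀ x y, D (x * y) = D x * y + x * D y)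
    (hτ : ∀ x y, τ (x * y) = τ (y * x)) (x y z : A) :
    τ (D ⁅x, y⁆ * z) =
      τ (D x * (y * z)) - τ (D x * (z * y)) + τ (D y * (z * x)) - τ (D y * (x * z)) := by
  rw [Ring.lie_def, map_sub, hD, hD, sub_mul, add_mul, add_mul, map_sub, map_add, map_add,
    trace_mul_mul_rotate hτ x, trace_mul_mul_rotate hτ y, mul_assoc, mul_assoc]
  abel

theorem trace_deriv_lie_mul_cyclic_sum (hD : ∀ x y, D (x * y) = D x * y + x * D y)
    (hτ : ∀ x y, τ (x * y) = τ (y * x)) (hτD : ∀ x, τ (D x) = 0) (a b c : A) :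
    τ (D ⁅a, b⁆ * c) + τ (D ⁅b, c⁆ * a) + τ (D ⁅c, a⁆ * b) = 0 := by
  have habc := trace_deriv_mul_mul hD hτ a b c
  have hacb := trace_deriv_mul_mul hD hτ a c b
  rw [hτD] at habc hacb
  simp only [trace_deriv_lie_mul hD hτ]
  linear_combination (norm := abel) (-2 : ℤ) • habc + (2 : ℤ) • hacb

end DerivTraceForm

theorem psi_cocycle_general (N : ℕ) (a b c : Loop N) :
    psi ⁅a, b⁆ c + psi ⁅b, c⁆ a + psi ⁅c, a⁆ b = 0 := by
  simp only [psi_eq_resTrace]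
  exact trace_deriv_lie_mul_cyclic_sum (AddMonoidHom.mapMatrix_mul_of_leibniz _ tDeriv_mul)
    resTrace_mul_comm resTrace_mapMatrix_tDeriv a b c

/-- The cocycle identity for ψ. -/
theorem psi_cocycle (N : ℕ) (hN : 0 < N) (a b c : Loop N) :
    psi ⁅a, b⁆ c + psi ⁅b, c⁆ a + psi ⁅c, a⁆ b = 0 :=
  psi_cocycle_general N a b c
end
end

section
/- The bracket [(a,λ),(b,μ)] = ([a,b], ψ(a,b)) on 𝔏 × ℂ is bilinear over ℂ, alternating, and satisfies the Jacobi identity; i.e., the central extension L̃(g) = 𝔏 ⊕ ℂc of the loop algebra by the cocycle ψ is a Lie algebra over ℂ. -/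
noncomputable section

/-- The bracket of the central extension $\tilde L(g) = 𝔏 ⊕ ℂc$. -/
def brCE {N : ℕ} (x y : Loop N × ℂ) : Loop N × ℂ :=
  (⁅x.1, y.1⁆, psi x.1 y.1)


/-! With the Euler derivation `D = t d/dt` acting entrywise and `φ x` the constant coefficient
of `trace x`, one has `ψ(a, b) = φ (D a * b)`. The functional `φ` is a trace, `φ (x * y) = φ (y * x)`,
and kills `D`-derivatives. For any such pair, `(a, b) ↦ φ (D a * b)` is alternating, since
`φ (D a * b) + φ (D b * a) = φ (D (a * b)) = 0`, and a Lie 2-cocycle, since cyclically permuting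
factors gives `φ (D a * (b * c)) + φ (D b * (c * a)) + φ (D c * (a * b)) = φ (D (a * b * c)) = 0`. -/

open LaurentPolynomial Matrix

section DerivationCocycle

variable {A M F : Type*} [Ring A] [AddCommGroup M] [FunLike F A M] [AddMonoidHomClass F A M]
  {φ : F} {D : A → A}

theorem map_deriv_mul_eq_neg (hφ : ∀ x y, φ (x * y) = φ (y * x))
    (hD : ∀ x y, D (x * y) = D x * y + x * D y) (hφD : ∀ x, φ (D x) = 0) (a b : A) :
    φ (D a * b) = -φ (D b * a) := by
  refine eq_neg_of_add_eq_zero_left ?_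
  rw [hφ (D b), ← map_add, ← hD, hφD]

theorem map_deriv_mul_lie_cyclic (hφ : ∀ x y, φ (x * y) = φ (y * x))
    (hD : ∀ x y, D (x * y) = D x * y + x * D y) (hφD : ∀ x, φ (D x) = 0) (a b c : A) :
    φ (D a * ⁅b, c⁆) + φ (D b * ⁅c, a⁆) + φ (D c * ⁅a, b⁆) = 0 := by
  have cyclic_mul : ∀ x y z, φ (D x * (y * z)) + φ (D y * (z * x)) + φ (D z * (x * y)) = 0 := by
    intro x y z
    rw [← mul_assoc (D y), hφ (D y * z), hφ (D z), ← map_add, ← map_add, ← hφD (x * y * z),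
      hD, hD, add_mul]
    simp only [mul_assoc]
  simp only [Ring.lie_def, mul_sub, map_sub]
  linear_combination (norm := abel) cyclic_mul a b c - cyclic_mul a c b

end DerivationCocycle

theorem Matrix.map_mul_of_leibniz {l m n α : Type*} [Fintype m] [NonUnitalNonAssocSemiring α]
    (D : α →+ α) (hD : ∀ x y, D (x * y) = D x * y + x * D y)
    (a : Matrix l m α) (b : Matrix m n α) :
    (a * b).map D = a.map D * b + a * b.map D := by
  ext i j
  simp [mul_apply, hD, Finset.sum_add_distrib]

namespace LaurentPolynomial

variable {R : Type*} [CommRing R]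

def eulerDeriv : R[T;T⁻¹] →ₗ[R] R[T;T⁻¹] where
  toFun p := .ofCoeff <| .onFinset p.coeff.support (fun n ↦ n * p.coeff n)
    fun n hn ↦ Finsupp.mem_support_iff.2 (right_ne_zero_of_mul hn)
  map_add' p q := by ext n; simp [mul_add]
  map_smul' r p := by ext n; simp [mul_left_comm]

@[simp]
theorem coeff_eulerDeriv (p : R[T;T⁻¹]) (n : ℤ) : (eulerDeriv p).coeff n = n * p.coeff n :=
  rfl

theorem support_coeff_eulerDeriv_subset (p : R[T;T⁻¹]) :
    (eulerDeriv p).coeff.support ⊆ p.coeff.support := fun n ↦ by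
  simpa only [Finsupp.mem_support_iff, coeff_eulerDeriv] using right_ne_zero_of_mul

theorem eulerDeriv_single (n : ℤ) (r : R) :
    eulerDeriv (AddMonoidAlgebra.single n r) = AddMonoidAlgebra.single n (n * r) := by
  ext m
  simp only [coeff_eulerDeriv, AddMonoidAlgebra.coeff_single, Finsupp.single_apply]
  split_ifs with h <;> simp [h]

theorem eulerDeriv_mul (p q : R[T;T⁻¹]) :
    eulerDeriv (p * q) = eulerDeriv p * q + p * eulerDeriv q := by
  induction p using AddMonoidAlgebra.induction_linear with
  | zero => simp
  | add p p' hp hp' => simp only [add_mul, map_add, hp, hp']; abel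
  | single m r =>
    induction q using AddMonoidAlgebra.induction_linear with
    | zero => simp
    | add q q' hq hq' => simp only [mul_add, map_add, hq, hq']; abel
    | single n s =>
      simp only [AddMonoidAlgebra.single_mul_single, eulerDeriv_single,
        ← AddMonoidAlgebra.single_add]
      congr 1
      push_cast
      ring

theorem coeff_zero_eulerDeriv_mul (p q : R[T;T⁻¹]) {S : Finset ℤ} (hS : p.coeff.support ⊆ S) :
    (eulerDeriv p * q).coeff 0 = ∑ n ∈ S, n * (p.coeff n * q.coeff (-n)) := by
  rw [AddMonoidAlgebra.coeff_mul_apply_left,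
    Finsupp.sum_of_support_subset _ (s := S) ((support_coeff_eulerDeriv_subset p).trans hS)
      _ (by simp)]
  simp [mul_assoc]

end LaurentPolynomial

section TraceConstCoeff

variable {n R : Type*} [Fintype n] [CommRing R]

def traceConstCoeff : Matrix n n R[T;T⁻¹] →ₗ[R] R where
  toFun x := x.trace.coeff 0
  map_add' x y := by simp [trace_add]
  map_smul' c x := by simp [trace_smul]

theorem traceConstCoeff_mul_comm (x y : Matrix n n R[T;T⁻¹]) :
    traceConstCoeff (x * y) = traceConstCoeff (y * x) := by
  simp [traceConstCoeff, trace_mul_comm x]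

theorem traceConstCoeff_mapMatrix_eulerDeriv (x : Matrix n n R[T;T⁻¹]) :
    traceConstCoeff (eulerDeriv.mapMatrix x) = 0 := by
  simp [traceConstCoeff, ← AddMonoidHom.map_trace]

theorem mapMatrix_eulerDeriv_mul (x y : Matrix n n R[T;T⁻¹]) :
    eulerDeriv.mapMatrix (x * y) = eulerDeriv.mapMatrix x * y + x * eulerDeriv.mapMatrix y :=
  map_mul_of_leibniz eulerDeriv.toAddMonoidHom eulerDeriv_mul x y

end TraceConstCoeff

variable {N : ℕ}

theorem psi_eq_traceConstCoeff (a b : Loop N) :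
    psi a b = traceConstCoeff (eulerDeriv.mapMatrix a * b) := by
  obtain ⟨S, hS⟩ : ∃ S : Finset ℤ, ∀ i j, (a i j).coeff.support ⊆ S :=
    ⟨Finset.univ.biUnion fun i ↦ Finset.univ.biUnion fun j ↦ (a i j).coeff.support,
      fun i j n hn ↦ Finset.mem_biUnion.2 ⟨i, Finset.mem_univ _,
        Finset.mem_biUnion.2 ⟨j, Finset.mem_univ _, hn⟩⟩⟩
  have hsupp :
      (Function.support fun n : ℤ ↦ (n : ℂ) * (coeffM a n * coeffM b (-n)).trace) ⊆ S := by
    intro n hn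
    by_contra hnS
    have : coeffM a n = 0 := by
      ext i j
      exact Finsupp.notMem_support_iff.1 fun h ↦ hnS (hS i j h)
    simp [this] at hn
  rw [psi, finsum_eq_sum_of_support_subset _ hsupp]
  simp only [traceConstCoeff, LinearMap.mapMatrix_apply, LinearMap.coe_mk, AddHom.coe_mk, trace,
    mul_apply, map_apply, diag_apply, AddMonoidAlgebra.coeff_sum, Finsupp.finsetSum_apply,
    coeff_zero_eulerDeriv_mul _ _ (hS _ _), coeffM, Finset.mul_sum]
  rw [Finset.sum_comm]
  exact Finset.sum_congr rfl fun i _ ↦ Finset.sum_comm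

theorem psi_add_left (a a' b : Loop N) : psi (a + a') b = psi a b + psi a' b := by
  simp only [psi_eq_traceConstCoeff, map_add, add_mul]

theorem psi_add_right (a b b' : Loop N) : psi a (b + b') = psi a b + psi a b' := by
  simp only [psi_eq_traceConstCoeff, map_add, mul_add]

theorem psi_smul_left (c : ℂ) (a b : Loop N) : psi (c • a) b = c * psi a b := by
  simp only [psi_eq_traceConstCoeff, map_smul, smul_mul_assoc, smul_eq_mul]

theorem psi_smul_right (c : ℂ) (a b : Loop N) : psi a (c • b) = c * psi a b := by
  simp only [psi_eq_traceConstCoeff, map_smul, mul_smul_comm, smul_eq_mul]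

theorem psi_self (a : Loop N) : psi a a = 0 := by
  have h := map_deriv_mul_eq_neg traceConstCoeff_mul_comm mapMatrix_eulerDeriv_mul
    traceConstCoeff_mapMatrix_eulerDeriv a a
  rw [← psi_eq_traceConstCoeff] at h
  linear_combination h / 2

theorem psi_lie_cyclic (a b c : Loop N) : psi a ⁅b, c⁆ + psi b ⁅c, a⁆ + psi c ⁅a, b⁆ = 0 := by
  simp only [psi_eq_traceConstCoeff]
  exact map_deriv_mul_lie_cyclic traceConstCoeff_mul_comm mapMatrix_eulerDeriv_mul
    traceConstCoeff_mapMatrix_eulerDeriv a b c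

attribute [local instance] LieRing.ofAssociativeRing

theorem centralExtension_isLieAlgebra_general (N : ℕ) :
    (∀ x y z : Loop N × ℂ, brCE (x + y) z = brCE x z + brCE y z) ∧
    (∀ (c : ℂ) (x y : Loop N × ℂ), brCE (c • x) y = c • brCE x y) ∧
    (∀ x y z : Loop N × ℂ, brCE x (y + z) = brCE x y + brCE x z) ∧
    (∀ (c : ℂ) (x y : Loop N × ℂ), brCE x (c • y) = c • brCE x y) ∧
    (∀ x : Loop N × ℂ, brCE x x = 0) ∧
    (∀ x y z : Loop N × ℂ, brCE x (brCE y z) + brCE y (brCE z x) + brCE z (brCE x y) = 0) := by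
  refine ⟨fun x y z ↦ ?_, fun c x y ↦ ?_, fun x y z ↦ ?_, fun c x y ↦ ?_, fun x ↦ ?_,
    fun x y z ↦ ?_⟩
  · simp only [brCE, Prod.fst_add, add_lie, psi_add_left, Prod.mk_add_mk]
  · simp only [brCE, Prod.smul_fst, smul_lie, psi_smul_left, Prod.smul_mk, smul_eq_mul]
  · simp only [brCE, Prod.fst_add, lie_add, psi_add_right, Prod.mk_add_mk]
  · simp only [brCE, Prod.smul_fst, lie_smul, psi_smul_right, Prod.smul_mk, smul_eq_mul]
  · simp only [brCE, lie_self, psi_self, Prod.mk_eq_zero, and_self]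
  · simp only [brCE, Prod.mk_add_mk, Prod.mk_eq_zero]
    exact ⟨lie_jacobi x.1 y.1 z.1, psi_lie_cyclic x.1 y.1 z.1⟩

/-- The central extension of the loop algebra by the cocycle ψ is a Lie algebra over ℂ:
the bracket is ℂ-bilinear, alternating and satisfies the Jacobi identity. -/
theorem centralExtension_isLieAlgebra (N : ℕ) (hN : 0 < N) :
    (∀ x y z : Loop N × ℂ, brCE (x + y) z = brCE x z + brCE y z) ∧
    (∀ (c : ℂ) (x y : Loop N × ℂ), brCE (c • x) y = c • brCE x y) ∧
    (∀ x y z : Loop N × ℂ, brCE x (y + z) = brCE x y + brCE x z) ∧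
    (∀ (c : ℂ) (x y : Loop N × ℂ), brCE x (c • y) = c • brCE x y) ∧
    (∀ x : Loop N × ℂ, brCE x x = 0) ∧
    (∀ x y z : Loop N × ℂ, brCE x (brCE y z) + brCE y (brCE z x) + brCE z (brCE x y) = 0) :=
  centralExtension_isLieAlgebra_general N
end
end

section
/- Let U ∈ 𝔏 be invertible (a unit of the matrix ring over LaurentPolynomial ℂ). Then for all a, b ∈ 𝔏: ψ(U*a*U⁻¹, U*b*U⁻¹) = ψ(a,b) + Res(trace(U⁻¹ * U' * [a,b])), where U' denotes the entrywise Laurent derivative, i.e. (U')ₙ = (n+1)·U_{n+1} for all n ∈ ℤ, and Res(P) denotes the coefficient of t⁻¹ of a Laurent polynomial P. -/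
/-! `ψ(a, b) = Res tr(a' b)`, and the entrywise derivative `a ↦ a'` is a derivation of the matrix
ring, so differentiating `U U⁻¹ = 1` gives `(U⁻¹)' = -U⁻¹ U' U⁻¹`. With `L = U⁻¹ U'` this yields
`(U a U⁻¹)' = U (a' + [L, a]) U⁻¹`, hence `tr((U a U⁻¹)' U b U⁻¹) = tr(a' b) + tr([L, a] b)`, and
invariance of the trace form, `tr([L, a] b) = tr(L [a, b])`, finishes the computation. -/

noncomputable section

/-- The entrywise Laurent derivative: `(Uʹ)ₙ = (n+1)·U_{n+1}`. -/
def derM {N : ℕ} (a : Loop N) : Loop N :=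
  fun i j => AddMonoidAlgebra.ofCoeff (Finsupp.sum (a i j).coeff fun n c => Finsupp.single (n - 1) ((n : ℂ) * c))

/-- The residue of a Laurent polynomial: the coefficient of `t⁻¹`. -/
def res (p : LaurentPolynomial ℂ) : ℂ := p.coeff (-1)

namespace LaurentPolynomial

variable {R : Type*} [CommRing R]

def derivative (p : R[T;T⁻¹]) : R[T;T⁻¹] :=
  AddMonoidAlgebra.ofCoeff (p.coeff.sum fun n c => Finsupp.single (n - 1) ((n : R) * c))

theorem coeff_derivative (p : R[T;T⁻¹]) (k : ℤ) :
    (derivative p).coeff k = ((k : R) + 1) * p.coeff (k + 1) := by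
  simp only [derivative, AddMonoidAlgebra.coeff_ofCoeff, Finsupp.sum_apply, Finsupp.single_apply,
    sub_eq_iff_eq_add, Finsupp.sum_ite_eq', Finsupp.mem_support_iff]
  split_ifs with h
  · push_cast; ring
  · simp [Finsupp.notMem_support_iff.mp h]

theorem derivative_zero : derivative (0 : R[T;T⁻¹]) = 0 := by
  ext k
  simp [coeff_derivative]

theorem derivative_add (p q : R[T;T⁻¹]) : derivative (p + q) = derivative p + derivative q := by
  ext k
  simp only [AddMonoidAlgebra.coeff_add, Finsupp.add_apply, coeff_derivative]
  ring

theorem derivative_sum {ι : Type*} (s : Finset ι) (f : ι → R[T;T⁻¹]) :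
    derivative (∑ i ∈ s, f i) = ∑ i ∈ s, derivative (f i) :=
  map_sum (AddMonoidHom.mk' derivative derivative_add) f s

theorem derivative_single (n : ℤ) (c : R) :
    derivative (AddMonoidAlgebra.single n c) = AddMonoidAlgebra.single (n - 1) ((n : R) * c) := by
  ext k
  simp only [coeff_derivative, AddMonoidAlgebra.coeff_single, Finsupp.single_apply,
    sub_eq_iff_eq_add]
  split_ifs with h <;> simp [h]

theorem derivative_one : derivative (1 : R[T;T⁻¹]) = 0 := by
  simpa using derivative_single (R := R) 0 1

theorem derivative_mul (p q : R[T;T⁻¹]) :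
    derivative (p * q) = derivative p * q + p * derivative q := by
  induction p using AddMonoidAlgebra.induction_linear with
  | zero => simp [derivative_zero]
  | add f g hf hg => rw [add_mul, derivative_add, derivative_add, hf, hg]; ring
  | single m c =>
    induction q using AddMonoidAlgebra.induction_linear with
    | zero => simp [derivative_zero]
    | add f g hf hg => rw [mul_add, derivative_add, derivative_add, hf, hg]; ring
    | single n d =>
      simp only [AddMonoidAlgebra.single_mul_single, derivative_single]
      rw [show m - 1 + n = m + n - 1 by ring, show m + (n - 1) = m + n - 1 by ring,
        ← AddMonoidAlgebra.single_add]
      congr 1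
      push_cast
      ring

theorem coeff_derivative_mul_neg_one (p q : R[T;T⁻¹]) :
    (derivative p * q).coeff (-1) = ∑ᶠ n : ℤ, (n : R) * (p.coeff n * q.coeff (-n)) := by
  rw [AddMonoidAlgebra.coeff_mul_apply_right, ← finsum_comp_equiv (Equiv.neg ℤ),
    finsum_eq_sum_of_support_subset (s := q.coeff.support)]
  · refine Finset.sum_congr rfl fun n _ => ?_
    simp only [Equiv.neg_apply, neg_neg, coeff_derivative, show -1 + -n + 1 = -n by ring]
    push_cast
    ring
  · intro n hn
    contrapose! hn
    simp [Finsupp.notMem_support_iff.mp hn]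

end LaurentPolynomial

theorem Matrix.trace_lie_mul {n R : Type*} [Fintype n] [CommRing R]
    (x y z : Matrix n n R) : Matrix.trace (⁅x, y⁆ * z) = Matrix.trace (x * ⁅y, z⁆) := by
  simp only [Ring.lie_def, sub_mul, mul_sub, Matrix.trace_sub, Matrix.mul_assoc]
  rw [← Matrix.trace_mul_cycle' x z y]

open LaurentPolynomial Function

theorem derM_apply {N : ℕ} (a : Loop N) (i j : Fin N) : derM a i j = derivative (a i j) := rfl

theorem psi_eq_res_trace {N : ℕ} (a b : Loop N) : psi a b = res (Matrix.trace (derM a * b)) := by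
  have hfin : ∀ i k : Fin N,
      HasFiniteSupport fun n : ℤ => (n : ℂ) * ((a i k).coeff n * (b k i).coeff (-n)) :=
    fun i k => by fun_prop
  simp only [psi, res, coeffM, Matrix.trace, Matrix.diag_apply, Matrix.mul_apply,
    AddMonoidAlgebra.coeff_sum, Finsupp.finsetSum_apply, derM_apply, coeff_derivative_mul_neg_one,
    Finset.mul_sum]
  rw [finsum_sum_comm _ _ fun i _ => ?_]
  · exact Finset.sum_congr rfl fun i _ => finsum_sum_comm _ _ fun k _ => hfin i k
  · exact HasFiniteSupport.sum (hfin i) _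

theorem derM_mul {N : ℕ} (x y : Loop N) : derM (x * y) = derM x * y + x * derM y := by
  ext i j
  simp only [derM_apply, Matrix.mul_apply, Matrix.add_apply, derivative_sum, derivative_mul,
    Finset.sum_add_distrib]

theorem derM_one {N : ℕ} : derM (1 : Loop N) = 0 := by
  ext i j
  rw [derM_apply, Matrix.one_apply]
  split_ifs <;> simp [derivative_one, derivative_zero]

theorem derM_units_inv {N : ℕ} (U : (Loop N)ˣ) :
    derM (↑U⁻¹ : Loop N) = -((↑U⁻¹ : Loop N) * derM (U : Loop N) * (↑U⁻¹ : Loop N)) := by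
  have h : derM ((↑U⁻¹ : Loop N) * (U : Loop N)) = 0 := by rw [Units.inv_mul, derM_one]
  rw [derM_mul, add_eq_zero_iff_eq_neg] at h
  calc derM (↑U⁻¹ : Loop N) = derM (↑U⁻¹ : Loop N) * (U : Loop N) * (↑U⁻¹ : Loop N) := by
        rw [Units.mul_inv_cancel_right]
    _ = _ := by rw [h, neg_mul]

theorem derM_units_conj {N : ℕ} (U : (Loop N)ˣ) (a : Loop N) :
    derM (U * a * ↑U⁻¹ : Loop N) =
      U * (derM a + ⁅(↑U⁻¹ : Loop N) * derM (U : Loop N), a⁆) * (↑U⁻¹ : Loop N) := by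
  rw [derM_mul, derM_mul, derM_units_inv, Ring.lie_def]
  simp only [mul_add, add_mul, mul_sub, sub_mul, mul_neg, Matrix.mul_assoc,
    Units.mul_inv_cancel_left]
  abel

theorem trace_derM_units_conj_mul_units_conj {N : ℕ} (U : (Loop N)ˣ) (a b : Loop N) :
    Matrix.trace (derM (U * a * ↑U⁻¹ : Loop N) * (U * b * ↑U⁻¹ : Loop N)) =
      Matrix.trace (derM a * b) + Matrix.trace ((↑U⁻¹ : Loop N) * derM (U : Loop N) * ⁅a, b⁆) := by
  have hcancel : ∀ x : Loop N, U * x * ↑U⁻¹ * (U * b * ↑U⁻¹ : Loop N) = U * (x * b) * ↑U⁻¹ := by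
    intro x
    simp only [Matrix.mul_assoc, Units.inv_mul_cancel_left]
  rw [derM_units_conj, hcancel, Matrix.trace_units_conj, add_mul, Matrix.trace_add,
    Matrix.trace_lie_mul]

theorem res_add (p q : LaurentPolynomial ℂ) : res (p + q) = res p + res q := rfl

theorem psi_conj_general (N : ℕ) (U : (Loop N)ˣ) (a b : Loop N) :
    psi ((U : Loop N) * a * (↑U⁻¹ : Loop N)) ((U : Loop N) * b * (↑U⁻¹ : Loop N)) =
      psi a b + res (Matrix.trace ((↑U⁻¹ : Loop N) * derM (U : Loop N) * ⁅a, b⁆)) := by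
  rw [psi_eq_res_trace, psi_eq_res_trace, trace_derM_units_conj_mul_units_conj, res_add]

/-- Behaviour of the cocycle under conjugation by a unit `U` of the loop algebra:
`ψ(U a U⁻¹, U b U⁻¹) = ψ(a,b) + Res(tr(U⁻¹ Uʹ [a,b]))`. -/
theorem psi_conj (N : ℕ) (hN : 0 < N) (U : (Loop N)ˣ) (a b : Loop N) :
    psi ((U : Loop N) * a * (↑U⁻¹ : Loop N)) ((U : Loop N) * b * (↑U⁻¹ : Loop N)) =
      psi a b + res (Matrix.trace ((↑U⁻¹ : Loop N) * derM (U : Loop N) * ⁅a, b⁆)) :=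
  psi_conj_general N U a b
end
end

section
/- For N = 2, let e = E₁₂, f = E₂₁, h = E₁₁ − E₂₂ be the constant matrices in 𝔏 (so e = [[0,1],[0,0]], f = [[0,0],[1,0]], h = [[1,0],[0,−1]]). Then the compact real form of the loop algebra of sl₂, namely {X ∈ 𝔏 : ω(X) = X and trace(X) = 0}, equals the ℝ-linear span of the set {tⁿ·e − t⁻ⁿ·f, i·(tⁿ·e + t⁻ⁿ·f), tⁿ·h − t⁻ⁿ·h, i·(tⁿ·h + t⁻ⁿ·h) : n ∈ ℤ}, where tⁿ·X denotes the element of 𝔏 whose only nonzero coefficient matrix is X in degree n. -/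
noncomputable section

/-- The Cartan involution `ω`, determined by `(ω a)ₙ = −(a₋ₙ)ᴴ` for all `n : ℤ`,
i.e. the map `X(t) ↦ −conj(X)(t⁻¹)ᵗ`. -/
def omega {N : ℕ} (a : Loop N) : Loop N :=
  fun i j => AddMonoidAlgebra.ofCoeff
    (Finsupp.sum (a j i).coeff fun n c => Finsupp.single (-n) (-(starRingEnd ℂ c)))

/-- `tpow n X` is `tⁿ·X`, the element of the loop algebra whose only nonzero coefficient
matrix is `X`, in degree `n`. -/
def tpow {N : ℕ} (n : ℤ) (X : Matrix (Fin N) (Fin N) ℂ) : Loop N :=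
  fun i j => AddMonoidAlgebra.ofCoeff (Finsupp.single n (X i j))

/-- The generator `e = E₁₂`. -/
def eMat : Matrix (Fin 2) (Fin 2) ℂ := !![0, 1; 0, 0]

/-- The generator `f = E₂₁`. -/
def fMat : Matrix (Fin 2) (Fin 2) ℂ := !![0, 0; 1, 0]

/-- The generator `h = E₁₁ − E₂₂`. -/
def hMat : Matrix (Fin 2) (Fin 2) ℂ := !![1, 0; 0, -1]

/-!
The map `X ↦ X + ω X` is ℝ-linear, sends trace-zero loops into the compact real form and is
multiplication by `2` there; so it suffices that it sends every trace-zero loop into the span.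
A trace-zero loop is a finite sum of terms `c • tⁿB` with `c ∈ ℂ` and `B ∈ {e, f, h}`. Writing
`c • Y = re c • Y + im c • (i • Y)`, the terms with `B = e, h` are handled by the generators,
which are exactly the images of `tⁿe`, `i tⁿe`, `tⁿh`, `i tⁿh`; and a term with `B = f` has the
same image as its `ω`-transform, which is a multiple of `t⁻ⁿe`.
-/

open Matrix

lemma Submodule.smul_mem_of_mem_of_I_smul_mem {V : Type*} [AddCommGroup V] [Module ℂ V]
    [Module ℝ V] [IsScalarTower ℝ ℂ V] (M : Submodule ℝ V) {a : V} (ha : a ∈ M)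
    (hIa : Complex.I • a ∈ M) (c : ℂ) : c • a ∈ M := by
  have hc : c • a = c.re • a + c.im • Complex.I • a := by
    conv_lhs => rw [← Complex.re_add_im c, add_smul, mul_smul]
    exact congrArg₂ (· + ·) (algebraMap_smul ℂ c.re a) (algebraMap_smul ℂ c.im _)
  rw [hc]
  exact M.add_mem (M.smul_mem _ ha) (M.smul_mem _ hIa)

section LoopAlgebra

variable {N : ℕ}

lemma coeffM_apply (a : Loop N) (n : ℤ) (i j : Fin N) : coeffM a n i j = (a i j).coeff n := rfl

lemma ext_coeffM {a b : Loop N} (h : ∀ n, coeffM a n = coeffM b n) : a = b := by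
  funext i j
  exact AddMonoidAlgebra.coeff_injective (Finsupp.ext fun n => congrFun₂ (h n) i j)

lemma coeffM_add (a b : Loop N) (n : ℤ) : coeffM (a + b) n = coeffM a n + coeffM b n := rfl

lemma coeffM_smul (c : ℂ) (a : Loop N) (n : ℤ) : coeffM (c • a) n = c • coeffM a n := rfl

lemma coeffM_neg (a : Loop N) (n : ℤ) : coeffM (-a) n = -coeffM a n := rfl

lemma coeffM_sum {ι : Type*} (s : Finset ι) (a : ι → Loop N) (n : ℤ) :
    coeffM (∑ k ∈ s, a k) n = ∑ k ∈ s, coeffM (a k) n := by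
  ext i j
  simp only [coeffM_apply, Matrix.sum_apply, AddMonoidAlgebra.coeff_sum, Finsupp.coe_finsetSum,
    Finset.sum_apply]

lemma trace_coeffM (a : Loop N) (n : ℤ) : trace (coeffM a n) = (trace a).coeff n := by
  simp only [trace, diag, coeffM_apply, AddMonoidAlgebra.coeff_sum, Finsupp.coe_finsetSum,
    Finset.sum_apply]

lemma coeffM_tpow (n m : ℤ) (A : Matrix (Fin N) (Fin N) ℂ) :
    coeffM (tpow n A) m = if n = m then A else 0 := by
  ext i j
  simp only [coeffM_apply, tpow, AddMonoidAlgebra.coeff_ofCoeff, Finsupp.single_apply]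
  split_ifs <;> rfl

lemma coeffM_omega (a : Loop N) (n : ℤ) : coeffM (omega a) n = -(coeffM a (-n))ᴴ := by
  ext i j
  simp only [coeffM_apply, omega, AddMonoidAlgebra.coeff_ofCoeff, Finsupp.sum_apply,
    Matrix.neg_apply, Matrix.conjTranspose_apply]
  rw [Finsupp.sum_eq_single (-n)]
  · simp only [neg_neg, Finsupp.single_neg, Finsupp.coe_neg, Pi.neg_apply,
      Finsupp.single_eq_same, RCLike.star_def]
  · intro k _ hk
    simp [neg_eq_iff_eq_neg, hk]
  · simp

lemma tpow_add (n : ℤ) (A B : Matrix (Fin N) (Fin N) ℂ) :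
    tpow n (A + B) = tpow n A + tpow n B :=
  ext_coeffM fun m => by simp only [coeffM_add, coeffM_tpow]; split_ifs <;> simp

lemma tpow_smul (n : ℤ) (c : ℂ) (A : Matrix (Fin N) (Fin N) ℂ) :
    tpow n (c • A) = c • tpow n A :=
  ext_coeffM fun m => by simp only [coeffM_smul, coeffM_tpow]; split_ifs <;> simp

lemma exists_sum_tpow_coeffM (X : Loop N) : ∃ T : Finset ℤ, ∑ n ∈ T, tpow n (coeffM X n) = X := by
  classical
  refine ⟨Finset.univ.biUnion fun p : Fin N × Fin N => (X p.1 p.2).coeff.support,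
    ext_coeffM fun m => ?_⟩
  simp only [coeffM_sum, coeffM_tpow, Finset.sum_ite_eq']
  split_ifs with hm
  · rfl
  · ext i j
    by_contra h
    exact hm (Finset.mem_biUnion.2 ⟨(i, j), Finset.mem_univ _,
      Finsupp.mem_support_iff.2 fun h0 => h (by simp [coeffM_apply, h0])⟩)

lemma omega_add (a b : Loop N) : omega (a + b) = omega a + omega b :=
  ext_coeffM fun n => by simp only [coeffM_omega, coeffM_add, conjTranspose_add, neg_add]

lemma omega_smul (c : ℂ) (a : Loop N) : omega (c • a) = starRingEnd ℂ c • omega a :=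
  ext_coeffM fun n => by
    simp only [coeffM_omega, coeffM_smul, conjTranspose_smul, smul_neg, RCLike.star_def]

lemma omega_omega (a : Loop N) : omega (omega a) = a :=
  ext_coeffM fun n => by
    simp only [coeffM_omega, neg_neg, conjTranspose_neg, conjTranspose_conjTranspose]

lemma omega_tpow (n : ℤ) (A : Matrix (Fin N) (Fin N) ℂ) : omega (tpow n A) = -tpow (-n) Aᴴ :=
  ext_coeffM fun m => by
    simp only [coeffM_omega, coeffM_tpow, coeffM_neg]
    split_ifs <;> first | omega | simp

lemma trace_eq_zero_iff_forall_trace_coeffM {a : Loop N} :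
    trace a = 0 ↔ ∀ n, trace (coeffM a n) = 0 := by
  simp only [trace_coeffM, ← AddMonoidAlgebra.coeff_eq_zero, Finsupp.ext_iff,
    Finsupp.coe_zero, Pi.zero_apply]

lemma trace_omega_eq_zero {a : Loop N} (ha : trace a = 0) : trace (omega a) = 0 := by
  rw [trace_eq_zero_iff_forall_trace_coeffM] at ha ⊢
  intro n
  rw [coeffM_omega, trace_neg, trace_conjTranspose, ha, star_zero, neg_zero]

lemma trace_tpow_eq_zero (n : ℤ) {A : Matrix (Fin N) (Fin N) ℂ} (hA : trace A = 0) :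
    trace (tpow n A) = 0 :=
  trace_eq_zero_iff_forall_trace_coeffM.2 fun m => by
    rw [coeffM_tpow]; split_ifs <;> simp [hA]

def omegaₗ : Loop N →ₗ[ℝ] Loop N where
  toFun := omega
  map_add' := omega_add
  map_smul' r a := by
    rw [← Complex.coe_smul, omega_smul, Complex.conj_ofReal, Complex.coe_smul, RingHom.id_apply]

def symmOmega : Loop N →ₗ[ℝ] Loop N := LinearMap.id + omegaₗ

lemma symmOmega_apply (a : Loop N) : symmOmega a = a + omega a := rfl

lemma symmOmega_omega (a : Loop N) : symmOmega (omega a) = symmOmega a := by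
  rw [symmOmega_apply, symmOmega_apply, omega_omega, add_comm]

lemma omega_symmOmega (a : Loop N) : omega (symmOmega a) = symmOmega a := by
  rw [symmOmega_apply, omega_add, omega_omega, add_comm]

variable (N) in
def compactRealForm : Submodule ℝ (Loop N) where
  carrier := {X | omega X = X ∧ trace X = 0}
  add_mem' := fun ⟨ha, hta⟩ ⟨hb, htb⟩ =>
    ⟨by rw [omega_add, ha, hb], by rw [trace_add, hta, htb, add_zero]⟩
  zero_mem' := ⟨map_zero omegaₗ, trace_zero _ _⟩
  smul_mem' r a := fun ⟨ha, hta⟩ =>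
    ⟨(map_smul omegaₗ r a).trans (congrArg (r • ·) ha), by rw [trace_smul, hta, smul_zero]⟩

lemma symmOmega_mem_compactRealForm {a : Loop N} (ha : trace a = 0) :
    symmOmega a ∈ compactRealForm N :=
  ⟨omega_symmOmega a, by rw [symmOmega_apply, trace_add, ha, trace_omega_eq_zero ha, add_zero]⟩

lemma two_smul_eq_symmOmega {X : Loop N} (hX : omega X = X) : (2 : ℝ) • X = symmOmega X := by
  rw [symmOmega_apply, hX, two_smul]

lemma symmOmega_tpow (n : ℤ) (A : Matrix (Fin N) (Fin N) ℂ) :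
    symmOmega (tpow n A) = tpow n A - tpow (-n) Aᴴ := by
  rw [symmOmega_apply, omega_tpow, sub_eq_add_neg]

lemma symmOmega_I_smul_tpow (n : ℤ) (A : Matrix (Fin N) (Fin N) ℂ) :
    symmOmega (Complex.I • tpow n A) = Complex.I • (tpow n A + tpow (-n) Aᴴ) := by
  rw [symmOmega_apply, omega_smul, omega_tpow, Complex.conj_I, neg_smul, smul_neg, neg_neg,
    smul_add]

lemma tpow_sub_tpow_conjTranspose_mem (n : ℤ) {A : Matrix (Fin N) (Fin N) ℂ}
    (hA : trace A = 0) : tpow n A - tpow (-n) Aᴴ ∈ compactRealForm N :=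
  symmOmega_tpow n A ▸ symmOmega_mem_compactRealForm (trace_tpow_eq_zero n hA)

lemma I_smul_tpow_add_tpow_conjTranspose_mem (n : ℤ) {A : Matrix (Fin N) (Fin N) ℂ}
    (hA : trace A = 0) : Complex.I • (tpow n A + tpow (-n) Aᴴ) ∈ compactRealForm N :=
  symmOmega_I_smul_tpow n A ▸ symmOmega_mem_compactRealForm
    (by rw [trace_smul, trace_tpow_eq_zero n hA, smul_zero])

end LoopAlgebra

lemma eMat_conjTranspose : eMatᴴ = fMat := by
  ext i j; fin_cases i <;> fin_cases j <;> simp [eMat, fMat]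

lemma fMat_conjTranspose : fMatᴴ = eMat := by
  rw [← eMat_conjTranspose, conjTranspose_conjTranspose]

lemma hMat_conjTranspose : hMatᴴ = hMat := by
  ext i j; fin_cases i <;> fin_cases j <;> simp [hMat]

lemma trace_eMat : trace eMat = 0 := by simp [eMat, trace_fin_two]

lemma trace_hMat : trace hMat = 0 := by simp [hMat, trace_fin_two]

lemma eq_smul_eMat_add_smul_fMat_add_smul_hMat {A : Matrix (Fin 2) (Fin 2) ℂ} (hA : trace A = 0) :
    A = A 0 1 • eMat + A 1 0 • fMat + A 0 0 • hMat := by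
  have h11 : A 1 1 = -A 0 0 := by rw [trace_fin_two] at hA; linear_combination hA
  ext i j; fin_cases i <;> fin_cases j <;> simp [eMat, fMat, hMat, h11]

def sl2Generators : Set (Loop 2) :=
  {x | ∃ n : ℤ,
    x = tpow n eMat - tpow (-n) fMat ∨
    x = Complex.I • (tpow n eMat + tpow (-n) fMat) ∨
    x = tpow n hMat - tpow (-n) hMat ∨
    x = Complex.I • (tpow n hMat + tpow (-n) hMat)}

lemma span_sl2Generators_le : Submodule.span ℝ sl2Generators ≤ compactRealForm 2 := by
  rw [Submodule.span_le]
  rintro x ⟨n, rfl | rfl | rfl | rfl⟩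
  · simpa only [eMat_conjTranspose, SetLike.mem_coe] using
      tpow_sub_tpow_conjTranspose_mem n trace_eMat
  · simpa only [eMat_conjTranspose, SetLike.mem_coe] using
      I_smul_tpow_add_tpow_conjTranspose_mem n trace_eMat
  · simpa only [hMat_conjTranspose, SetLike.mem_coe] using
      tpow_sub_tpow_conjTranspose_mem n trace_hMat
  · simpa only [hMat_conjTranspose, SetLike.mem_coe] using
      I_smul_tpow_add_tpow_conjTranspose_mem n trace_hMat

lemma smul_tpow_eMat_mem_comap (n : ℤ) (c : ℂ) :
    c • tpow n eMat ∈ (Submodule.span ℝ sl2Generators).comap symmOmega := by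
  apply Submodule.smul_mem_of_mem_of_I_smul_mem <;> apply Submodule.subset_span
  · exact ⟨n, Or.inl (by rw [symmOmega_tpow, eMat_conjTranspose])⟩
  · exact ⟨n, Or.inr (Or.inl (by rw [symmOmega_I_smul_tpow, eMat_conjTranspose]))⟩

lemma smul_tpow_hMat_mem_comap (n : ℤ) (c : ℂ) :
    c • tpow n hMat ∈ (Submodule.span ℝ sl2Generators).comap symmOmega := by
  apply Submodule.smul_mem_of_mem_of_I_smul_mem <;> apply Submodule.subset_span
  · exact ⟨n, Or.inr (Or.inr (Or.inl (by rw [symmOmega_tpow, hMat_conjTranspose])))⟩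
  · exact ⟨n, Or.inr (Or.inr (Or.inr (by rw [symmOmega_I_smul_tpow, hMat_conjTranspose])))⟩

lemma smul_tpow_fMat_mem_comap (n : ℤ) (c : ℂ) :
    c • tpow n fMat ∈ (Submodule.span ℝ sl2Generators).comap symmOmega := by
  rw [Submodule.mem_comap, ← symmOmega_omega, omega_smul, omega_tpow, fMat_conjTranspose,
    smul_neg, ← neg_smul]
  exact smul_tpow_eMat_mem_comap (-n) _

lemma tpow_mem_comap (n : ℤ) {A : Matrix (Fin 2) (Fin 2) ℂ} (hA : trace A = 0) :
    tpow n A ∈ (Submodule.span ℝ sl2Generators).comap symmOmega := by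
  rw [eq_smul_eMat_add_smul_fMat_add_smul_hMat hA, tpow_add, tpow_add, tpow_smul, tpow_smul,
    tpow_smul]
  exact add_mem (add_mem (smul_tpow_eMat_mem_comap n _) (smul_tpow_fMat_mem_comap n _))
    (smul_tpow_hMat_mem_comap n _)

lemma mem_comap_of_trace_eq_zero {X : Loop 2} (hX : trace X = 0) :
    X ∈ (Submodule.span ℝ sl2Generators).comap symmOmega := by
  obtain ⟨T, hT⟩ := exists_sum_tpow_coeffM X
  rw [← hT]
  exact Submodule.sum_mem _ fun n _ =>
    tpow_mem_comap n (trace_eq_zero_iff_forall_trace_coeffM.1 hX n)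

lemma compactRealForm_two_le_span_sl2Generators :
    compactRealForm 2 ≤ Submodule.span ℝ sl2Generators := by
  rintro X ⟨hωX, hX⟩
  have h2X : (2 : ℝ) • X ∈ Submodule.span ℝ sl2Generators :=
    two_smul_eq_symmOmega hωX ▸ mem_comap_of_trace_eq_zero hX
  simpa using Submodule.smul_mem _ (2⁻¹ : ℝ) h2X

/-- The compact real form of the loop algebra of `sl₂` (the ω-fixed, trace-zero elements)
is the ℝ-linear span of the elements
`tⁿe − t⁻ⁿf`, `i(tⁿe + t⁻ⁿf)`, `tⁿh − t⁻ⁿh`, `i(tⁿh + t⁻ⁿh)`, `n ∈ ℤ`. -/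
theorem compactRealForm_sl2 :
    {X : Loop 2 | omega X = X ∧ Matrix.trace X = 0} =
      ↑(Submodule.span ℝ
        {x : Loop 2 | ∃ n : ℤ,
          x = tpow n eMat - tpow (-n) fMat ∨
          x = Complex.I • (tpow n eMat + tpow (-n) fMat) ∨
          x = tpow n hMat - tpow (-n) hMat ∨
          x = Complex.I • (tpow n hMat + tpow (-n) hMat)}) :=
  congrArg SetLike.coe <|
    le_antisymm compactRealForm_two_le_span_sl2Generators span_sl2Generators_le
end
end

section
/- Let p, q be positive natural numbers with N = p + q, let J ∈ 𝔏 be the constant diagonal matrix diag(1,…,1,−1,…,−1) (p ones, q minus-ones), and let C = {X ∈ 𝔏 : ω(X) = X, trace(X) = 0} be the compact real form, with K = {X ∈ C : J*X*J = X} and P = {X ∈ C : J*X*J = −X}. Then the noncompact real form obtained by the Weyl unitary trick satisfies: {Y + i·Z : Y ∈ K, Z ∈ P} = {X ∈ 𝔏 : trace(X) = 0 and Xₙ = −J*(X₋ₙ)ᴴ*J for all n ∈ ℤ}, i.e., K ⊕ iP is exactly the fixed-point set (intersected with trace zero) of the conjugate-linear involution θ = σ_J ∘ ω, which is the loop algebra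 su^{(1)}(p,q). -/
noncomputable section

/-- The constant diagonal matrix `J = diag(1,…,1,−1,…,−1)` (`p` ones, `q` minus-ones),
as an element of the loop algebra `Loop (p + q)`. -/
def Jmat (p q : ℕ) : Loop (p + q) :=
  Matrix.diagonal fun i => if (i : ℕ) < p then 1 else -1

/-- The constant diagonal matrix `J = diag(1,…,1,−1,…,−1)` with complex entries. -/
def Jmat₀ (p q : ℕ) : Matrix (Fin (p + q)) (Fin (p + q)) ℂ :=
  Matrix.diagonal fun i => if (i : ℕ) < p then 1 else -1

/-- `K`: the `σ_J`-fixed part of the compact real form. -/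
def Kset (p q : ℕ) : Set (Loop (p + q)) :=
  {X | omega X = X ∧ Matrix.trace X = 0 ∧ Jmat p q * X * Jmat p q = X}

/-- `P`: the `σ_J`-anti-fixed part of the compact real form. -/
def Pset (p q : ℕ) : Set (Loop (p + q)) :=
  {X | omega X = X ∧ Matrix.trace X = 0 ∧ Jmat p q * X * Jmat p q = -X}

open Matrix LaurentPolynomial Complex

/-! `x = ½(x + ω x) + i • (-½i)(x - ω x)` splits `x` into two `ω`-fixed parts, because `ω` is a
conjugate-linear involution. If `σ (ω x) = x` and `σ` commutes with `ω`, then `σ x = ω x`, which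
makes the first part `σ`-fixed and the second `σ`-antifixed. In the loop algebra everything is
checked coefficientwise, through `(ω a)ₙ = -(a₋ₙ)ᴴ` and `(J a J)ₙ = J aₙ J`. -/

theorem weylUnitaryTrick {M : Type*} [AddCommGroup M] [Module ℂ M]
    (ω : M →ₗ⋆[ℂ] M) (σ : M →ₗ[ℂ] M) (hω : ∀ x, ω (ω x) = x) (hσω : ∀ x, σ (ω x) = ω (σ x))
    (S : Submodule ℂ M) (hS : ∀ x ∈ S, ω x ∈ S) :
    {x | ∃ y, (ω y = y ∧ y ∈ S ∧ σ y = y) ∧ ∃ z, (ω z = z ∧ z ∈ S ∧ σ z = -z) ∧ x = y + I • z} =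
      {x | x ∈ S ∧ σ (ω x) = x} := by
  ext x
  constructor
  · rintro ⟨y, ⟨hωy, hyS, hσy⟩, z, ⟨hωz, hzS, hσz⟩, rfl⟩
    refine ⟨S.add_mem hyS (S.smul_mem I hzS), ?_⟩
    simp [hωy, hωz, hσy, hσz, conj_I]
  · rintro ⟨hxS, hθx⟩
    have hσx : σ x = ω x := by conv_rhs => rw [← hθx, ← hσω, hω]
    have hI : I * -(2⁻¹ * I) = 2⁻¹ := by linear_combination (-2⁻¹ : ℂ) * I_mul_I
    refine ⟨(2⁻¹ : ℂ) • (x + ω x), ⟨?_, ?_, ?_⟩, (-(2⁻¹ * I) : ℂ) • (x - ω x), ⟨?_, ?_, ?_⟩, ?_⟩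
    · simp [hω, map_ofNat, add_comm]
    · exact S.smul_mem _ (S.add_mem hxS (hS x hxS))
    · simp [hσx, hθx, add_comm]
    · simp [hω, map_ofNat, conj_I, smul_sub]
      abel
    · exact S.smul_mem _ (S.sub_mem hxS (hS x hxS))
    · simp [hσx, hθx, smul_sub]
    · rw [smul_smul, hI]
      module

namespace Loop

variable {N : ℕ}

theorem ext_coeffM {a b : Loop N} (h : ∀ n, coeffM a n = coeffM b n) : a = b := by
  ext i j n
  exact congrFun₂ (h n) i j

@[simp]
theorem coeffM_add (a b : Loop N) (n : ℤ) : coeffM (a + b) n = coeffM a n + coeffM b n := rfl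

@[simp]
theorem coeffM_smul (c : ℂ) (a : Loop N) (n : ℤ) : coeffM (c • a) n = c • coeffM a n := rfl

theorem coeff_trace (a : Loop N) (n : ℤ) : (trace a).coeff n = trace (coeffM a n) := by
  simp [trace, coeffM, AddMonoidAlgebra.coeff_sum]

theorem coeffM_omega (a : Loop N) (n : ℤ) : coeffM (omega a) n = -(coeffM a (-n))ᴴ := by
  classical
  ext i j
  simp only [coeffM, omega, AddMonoidAlgebra.coeff_ofCoeff, Finsupp.sum_apply,
    Finsupp.single_apply]
  rw [Finsupp.sum, Finset.sum_eq_single (-n) (fun m _ hm => if_neg (by omega)) (by simp_all)]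
  simp [coeffM]

theorem coeffM_map_C_mul (A : Matrix (Fin N) (Fin N) ℂ) (X : Loop N) (n : ℤ) :
    coeffM (A.map C * X) n = A * coeffM X n := by
  ext i j
  simp [coeffM, Matrix.mul_apply, AddMonoidAlgebra.coeff_sum, ← smul_eq_C_mul]

theorem coeffM_mul_map_C (A : Matrix (Fin N) (Fin N) ℂ) (X : Loop N) (n : ℤ) :
    coeffM (X * A.map C) n = coeffM X n * A := by
  ext i j
  simp [coeffM, Matrix.mul_apply, AddMonoidAlgebra.coeff_sum, mul_comm _ (C _), ← smul_eq_C_mul]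
  exact Finset.sum_congr rfl fun _ _ => mul_comm _ _

theorem omega_omega (a : Loop N) : omega (omega a) = a :=
  ext_coeffM fun n => by simp [coeffM_omega]

theorem trace_omega_eq_zero {a : Loop N} (ha : trace a = 0) : trace (omega a) = 0 := by
  ext n
  rw [coeff_trace, coeffM_omega, trace_neg, trace_conjTranspose, ← coeff_trace, ha]
  simp

@[simps]
def omegaₛₗ : Loop N →ₗ⋆[ℂ] Loop N where
  toFun := omega
  map_add' a b := ext_coeffM fun n => by simp [coeffM_omega, add_comm]
  map_smul' c a := ext_coeffM fun n => by simp [coeffM_omega]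

@[simps]
def sigmaₗ (A : Matrix (Fin N) (Fin N) ℂ) : Loop N →ₗ[ℂ] Loop N where
  toFun X := A.map C * X * A.map C
  map_add' X Y := by simp [Matrix.mul_add, Matrix.add_mul]
  map_smul' c X := by simp

theorem coeffM_sigmaₗ (A : Matrix (Fin N) (Fin N) ℂ) (X : Loop N) (n : ℤ) :
    coeffM (sigmaₗ A X) n = A * coeffM X n * A := by
  simp [coeffM_mul_map_C, coeffM_map_C_mul]

theorem sigmaₗ_omega {A : Matrix (Fin N) (Fin N) ℂ} (hA : A.IsHermitian) (X : Loop N) :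
    sigmaₗ A (omega X) = omega (sigmaₗ A X) :=
  ext_coeffM fun n => by
    simp only [coeffM_sigmaₗ, coeffM_omega, conjTranspose_mul, hA.eq, Matrix.mul_neg,
      Matrix.neg_mul, Matrix.mul_assoc]

theorem sigmaₗ_omega_eq_self_iff (A : Matrix (Fin N) (Fin N) ℂ) (X : Loop N) :
    sigmaₗ A (omega X) = X ↔ ∀ n, coeffM X n = -(A * (coeffM X (-n))ᴴ * A) := by
  have hcoeff (n : ℤ) : coeffM (sigmaₗ A (omega X)) n = -(A * (coeffM X (-n))ᴴ * A) := by
    rw [coeffM_sigmaₗ, coeffM_omega, Matrix.mul_neg, Matrix.neg_mul]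
  simp_rw [← hcoeff]
  exact ⟨fun h n => by rw [h], fun h => (ext_coeffM h).symm⟩

end Loop

theorem Jmat_eq_map_C (p q : ℕ) : Jmat p q = (Jmat₀ p q).map C := by
  rw [Jmat, Jmat₀, diagonal_map (map_zero _)]
  congr with i
  split_ifs <;> simp

theorem isHermitian_Jmat₀ (p q : ℕ) : (Jmat₀ p q).IsHermitian :=
  isHermitian_diagonal_iff.2 fun i => by split_ifs <;> simp [isSelfAdjoint_iff]

theorem weylUnitaryTrick_su_pq_general (p q : ℕ) :
    {x : Loop (p + q) | ∃ Y ∈ Kset p q, ∃ Z ∈ Pset p q, x = Y + Complex.I • Z} =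
      {X : Loop (p + q) | Matrix.trace X = 0 ∧
        ∀ n : ℤ, coeffM X n = -(Jmat₀ p q * (coeffM X (-n)).conjTranspose * Jmat₀ p q)} := by
  have key := weylUnitaryTrick Loop.omegaₛₗ (Loop.sigmaₗ (Jmat₀ p q)) Loop.omega_omega
    (Loop.sigmaₗ_omega (isHermitian_Jmat₀ p q)) (LinearMap.ker (traceLinearMap _ ℂ _))
    (fun _ => Loop.trace_omega_eq_zero)
  simp only [Loop.omegaₛₗ_apply, Loop.sigmaₗ_omega_eq_self_iff, LinearMap.mem_ker,
    traceLinearMap_apply] at key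
  simp only [Loop.sigmaₗ_apply] at key
  simpa only [Kset, Pset, Jmat_eq_map_C, Set.mem_ofPred_eq] using key

/-- The Weyl unitary trick: `K ⊕ iP` is exactly the trace-zero fixed-point set of the
conjugate-linear involution `θ = σ_J ∘ ω`, i.e. the noncompact real form
`su⁽¹⁾(p,q)` given by `Xₙ = −J (X₋ₙ)ᴴ J` for all `n`. -/
theorem weylUnitaryTrick_su_pq (p q : ℕ) (hp : 0 < p) (hq : 0 < q) :
    {x : Loop (p + q) | ∃ Y ∈ Kset p q, ∃ Z ∈ Pset p q, x = Y + Complex.I • Z} =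
      {X : Loop (p + q) | Matrix.trace X = 0 ∧
        ∀ n : ℤ, coeffM X n = -(Jmat₀ p q * (coeffM X (-n)).conjTranspose * Jmat₀ p q)} :=
  weylUnitaryTrick_su_pq_general p q
end
end
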